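/- arXiv:1801.01219 — 6 statements merged into one kernel-verified Lean document; each statement's English description precedes it below -/
import Mathlib

section
/- If $\beta_{p,q}$ and $\beta_{p+q,r}$ are independent random variables with Beta distributions of parameters $(p,q)$ and $(p+q,r)$ respectively, then their product $\beta_{p,q}\cdot\beta_{p+q,r}$ has the Beta distribution with parameters $(p, q+r)$. -/
/-!
Since `x ^ n` times the `Beta(a, b)` density is `B(a + n, b) / B(a, b)` times the
`Beta(a + n, b)` density, the `n`-th moment of `Beta(a, b)` is `B(a + n, b) / B(a, b)`.
By independence the law of the product is the multiplicative convolution of the two laws, whose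
moments are the products of their moments; in terms of the Gamma function these products
telescope to the moments of `Beta(p, q + r)`. All laws involved live on `[0, 1]`, where a finite
measure is determined by its moments because polynomials are dense in `C([0, 1])`.
-/

open MeasureTheory ProbabilityTheory Set Polynomial

/-- The Beta distribution with parameters `a, b`, given by its density
`Γ(a+b)/(Γ(a)Γ(b)) x^(a-1) (1-x)^(b-1)` on `(0,1)`. -/
noncomputable def betaM (a b : ℝ) : Measure ℝ :=
  volume.withDensity fun x =>
    ENNReal.ofReal ((Set.Ioo (0:ℝ) 1).indicator
      (fun x => (Real.Gamma (a + b) / (Real.Gamma a * Real.Gamma b)) *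
        x ^ (a - 1) * (1 - x) ^ (b - 1)) x)

lemma dist_integral_le_of_ae_dist_le {α E : Type*} [MeasurableSpace α] [NormedAddCommGroup E]
    [NormedSpace ℝ E] {μ : Measure α} [IsFiniteMeasure μ] {f g : α → E} {C : ℝ}
    (hf : Integrable f μ) (hg : Integrable g μ) (h : ∀ᵐ x ∂μ, dist (f x) (g x) ≤ C) :
    dist (∫ x, f x ∂μ) (∫ x, g x ∂μ) ≤ C * μ.real univ := by
  rw [dist_eq_norm, ← integral_sub hf hg]
  exact norm_integral_le_of_norm_le_const (by simpa only [dist_eq_norm] using h)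

section MomentDeterminacy

variable {μ ν : Measure ℝ} {a b : ℝ}

lemma Continuous.integrable_of_ae_mem_Icc [IsLocallyFiniteMeasure μ] {f : ℝ → ℝ}
    (hf : Continuous f) (hμ : ∀ᵐ x ∂μ, x ∈ Icc a b) : Integrable f μ := by
  rw [← Measure.restrict_eq_self_of_ae_mem hμ]
  exact hf.integrableOn_Icc

lemma integral_eval_eq_of_integral_pow_eq [IsLocallyFiniteMeasure μ] [IsLocallyFiniteMeasure ν]
    (hμ : ∀ᵐ x ∂μ, x ∈ Icc a b) (hν : ∀ᵐ x ∂ν, x ∈ Icc a b)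
    (h : ∀ n : ℕ, ∫ x, x ^ n ∂μ = ∫ x, x ^ n ∂ν) (P : ℝ[X]) :
    ∫ x, P.eval x ∂μ = ∫ x, P.eval x ∂ν := by
  induction P using Polynomial.induction_on' with
  | add P Q hP hQ =>
    simp only [eval_add]
    rw [integral_add (P.continuous.integrable_of_ae_mem_Icc hμ)
        (Q.continuous.integrable_of_ae_mem_Icc hμ),
      integral_add (P.continuous.integrable_of_ae_mem_Icc hν)
        (Q.continuous.integrable_of_ae_mem_Icc hν), hP, hQ]
  | monomial n c =>
    simp only [eval_monomial, integral_const_mul, h n]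

lemma integral_eq_of_integral_pow_eq [IsFiniteMeasure μ] [IsFiniteMeasure ν]
    (hμ : ∀ᵐ x ∂μ, x ∈ Icc a b) (hν : ∀ᵐ x ∂ν, x ∈ Icc a b)
    (h : ∀ n : ℕ, ∫ x, x ^ n ∂μ = ∫ x, x ^ n ∂ν) {f : ℝ → ℝ} (hf : Continuous f) :
    ∫ x, f x ∂μ = ∫ x, f x ∂ν := by
  refine eq_of_forall_dist_le fun δ hδ => ?_
  set C := μ.real univ + ν.real univ + 1
  have hC : 0 < C := by positivity
  obtain ⟨P, hP⟩ := exists_polynomial_near_of_continuousOn a b f hf.continuousOn (δ / C)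
    (by positivity)
  have close (κ : Measure ℝ) [IsFiniteMeasure κ] (hκ : ∀ᵐ x ∂κ, x ∈ Icc a b) :
      dist (∫ x, f x ∂κ) (∫ x, P.eval x ∂κ) ≤ δ / C * κ.real univ :=
    dist_integral_le_of_ae_dist_le (hf.integrable_of_ae_mem_Icc hκ)
      (P.continuous.integrable_of_ae_mem_Icc hκ)
      (hκ.mono fun x hx => by rw [Real.dist_eq, abs_sub_comm]; exact (hP x hx).le)
  calc dist (∫ x, f x ∂μ) (∫ x, f x ∂ν)
      ≤ dist (∫ x, f x ∂μ) (∫ x, P.eval x ∂μ) + dist (∫ x, f x ∂ν) (∫ x, P.eval x ∂ν) := by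
        rw [integral_eval_eq_of_integral_pow_eq hμ hν h P]
        exact dist_triangle_right _ _ _
    _ ≤ δ / C * μ.real univ + δ / C * ν.real univ := add_le_add (close μ hμ) (close ν hν)
    _ ≤ δ := by
        rw [← mul_add, div_mul_eq_mul_div, div_le_iff₀ hC]
        exact mul_le_mul_of_nonneg_left (by linarith) hδ.le

theorem ext_of_integral_pow_eq [IsFiniteMeasure μ] [IsFiniteMeasure ν]
    (hμ : ∀ᵐ x ∂μ, x ∈ Icc a b) (hν : ∀ᵐ x ∂ν, x ∈ Icc a b)
    (h : ∀ n : ℕ, ∫ x, x ^ n ∂μ = ∫ x, x ^ n ∂ν) : μ = ν :=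
  ext_of_forall_integral_eq_of_IsFiniteMeasure fun f =>
    integral_eq_of_integral_pow_eq hμ hν h f.continuous

end MomentDeterminacy

section MulConvolution

variable {μ ν : Measure ℝ}

lemma integral_pow_mconv [SFinite μ] [SFinite ν] (n : ℕ) :
    ∫ x, x ^ n ∂(μ ∗ₘ ν) = (∫ x, x ^ n ∂μ) * ∫ x, x ^ n ∂ν := by
  rw [Measure.mconv, integral_map (by fun_prop) (by fun_prop)]
  simp only [mul_pow]
  exact integral_prod_mul (fun x : ℝ => x ^ n) (fun y : ℝ => y ^ n)

lemma ae_mem_Icc_mconv (hμ : ∀ᵐ x ∂μ, x ∈ Icc (0 : ℝ) 1) (hν : ∀ᵐ x ∂ν, x ∈ Icc (0 : ℝ) 1) :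
    ∀ᵐ x ∂(μ ∗ₘ ν), x ∈ Icc (0 : ℝ) 1 := by
  rw [Measure.mconv, ae_map_iff (p := (· ∈ Icc (0 : ℝ) 1)) (by fun_prop) measurableSet_Icc]
  filter_upwards [Measure.quasiMeasurePreserving_fst.ae hμ,
    Measure.quasiMeasurePreserving_snd.ae hν] with z hz₁ hz₂
  exact unitInterval.mul_mem hz₁ hz₂

end MulConvolution

section Beta

variable {a b : ℝ}

lemma betaM_eq_betaMeasure (a b : ℝ) : betaM a b = betaMeasure a b := by
  refine congrArg volume.withDensity (funext fun x => ?_)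
  simp only [betaPDF, betaPDFReal, beta, indicator, mem_Ioo, one_div_div]

lemma measurable_betaPDF (a b : ℝ) : Measurable (betaPDF a b) :=
  (measurable_betaPDFReal a b).ennreal_ofReal

lemma betaPDFReal_nonneg (ha : 0 < a) (hb : 0 < b) (x : ℝ) : 0 ≤ betaPDFReal a b x := by
  by_cases hx : 0 < x ∧ x < 1
  · exact (betaPDFReal_pos hx.1 hx.2 ha hb).le
  · simp only [betaPDFReal, if_neg hx, le_refl]

lemma integral_betaPDFReal (ha : 0 < a) (hb : 0 < b) : ∫ x, betaPDFReal a b x = 1 := by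
  rw [integral_eq_lintegral_of_nonneg_ae (.of_forall (betaPDFReal_nonneg ha hb))
    (measurable_betaPDFReal a b).aestronglyMeasurable]
  change (∫⁻ x, betaPDF a b x).toReal = 1
  simp [lintegral_betaPDF_eq_one ha hb]

lemma betaPDFReal_mul_pow (ha : 0 < a) (hb : 0 < b) (n : ℕ) (x : ℝ) :
    betaPDFReal a b x * x ^ n = beta (a + n) b / beta a b * betaPDFReal (a + n) b x := by
  unfold betaPDFReal
  split_ifs with hx
  · have hshift : x ^ (a + n - 1) = x ^ (a - 1) * x ^ n := by
      rw [sub_eq_add_neg, add_right_comm, Real.rpow_add hx.1, Real.rpow_natCast, ← sub_eq_add_neg]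
    have hβ : beta (a + n) b ≠ 0 := (beta_pos (by positivity) hb).ne'
    rw [hshift]
    field_simp
  · simp

lemma integral_pow_betaMeasure (ha : 0 < a) (hb : 0 < b) (n : ℕ) :
    ∫ x, x ^ n ∂betaMeasure a b = beta (a + n) b / beta a b := by
  rw [betaMeasure, integral_withDensity_eq_integral_toReal_smul
    (measurable_betaPDF a b) (.of_forall fun _ => ENNReal.ofReal_lt_top)]
  simp only [betaPDF, ENNReal.toReal_ofReal (betaPDFReal_nonneg ha hb _), smul_eq_mul,
    betaPDFReal_mul_pow ha hb, integral_const_mul,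
    integral_betaPDFReal (by positivity : 0 < a + n) hb, mul_one]

lemma ae_mem_Icc_betaMeasure (a b : ℝ) : ∀ᵐ x ∂betaMeasure a b, x ∈ Icc (0 : ℝ) 1 := by
  rw [betaMeasure, ae_withDensity_iff (measurable_betaPDF a b)]
  refine .of_forall fun x hx => ⟨?_, ?_⟩
  · by_contra! h
    exact hx (betaPDF_eq_zero_of_nonpos h.le)
  · by_contra! h
    exact hx (betaPDF_eq_zero_of_one_le h.le)

lemma beta_add_div_beta_mul_beta_add_div_beta {p q r : ℝ} (hp : 0 < p) (hq : 0 < q) (hr : 0 < r)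
    (n : ℕ) :
    beta (p + n) q / beta p q * (beta (p + q + n) r / beta (p + q) r) =
      beta (p + n) (q + r) / beta p (q + r) := by
  have hΓ {x : ℝ} (hx : 0 < x) : Real.Gamma x ≠ 0 := (Real.Gamma_pos_of_pos hx).ne'
  unfold beta
  rw [show p + n + q = p + q + n by ring, show p + q + n + r = p + n + (q + r) by ring,
    show p + (q + r) = p + q + r by ring]
  field_simp [hΓ hp, hΓ hq, hΓ hr, hΓ (by positivity : 0 < p + q), hΓ (by positivity : 0 < q + r),
    hΓ (by positivity : 0 < p + q + r), hΓ (by positivity : 0 < p + n),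
    hΓ (by positivity : 0 < p + q + n), hΓ (by positivity : 0 < p + n + (q + r))]

theorem betaMeasure_mconv_betaMeasure {p q r : ℝ} (hp : 0 < p) (hq : 0 < q) (hr : 0 < r) :
    betaMeasure p q ∗ₘ betaMeasure (p + q) r = betaMeasure p (q + r) := by
  have := isProbabilityMeasureBeta hp hq
  have := isProbabilityMeasureBeta (add_pos hp hq) hr
  have := isProbabilityMeasureBeta hp (add_pos hq hr)
  refine ext_of_integral_pow_eq
    (ae_mem_Icc_mconv (ae_mem_Icc_betaMeasure _ _) (ae_mem_Icc_betaMeasure _ _))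
    (ae_mem_Icc_betaMeasure _ _) fun n => ?_
  rw [integral_pow_mconv, integral_pow_betaMeasure hp hq,
    integral_pow_betaMeasure (by positivity) hr, integral_pow_betaMeasure hp (by positivity),
    beta_add_div_beta_mul_beta_add_div_beta hp hq hr]

end Beta

/-- If `β_{p,q}` and `β_{p+q,r}` are independent Beta random variables, their product
is Beta distributed with parameters `(p, q+r)`. -/
theorem beta_mul_beta {Ω : Type*} [MeasurableSpace Ω] (P : Measure Ω) [IsProbabilityMeasure P]
    (p q r : ℝ) (hp : 0 < p) (hq : 0 < q) (hr : 0 < r)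
    (X Y : Ω → ℝ)
    (hX : Measure.map X P = betaM p q)
    (hY : Measure.map Y P = betaM (p + q) r)
    (hindep : IndepFun X Y P) :
    Measure.map (fun ω => X ω * Y ω) P = betaM p (q + r) := by
  rw [betaM_eq_betaMeasure] at hX hY ⊢
  have hXm : AEMeasurable X P := aemeasurable_of_map_neZero <| by
    rw [hX]; exact (isProbabilityMeasureBeta hp hq).neZero
  have hYm : AEMeasurable Y P := aemeasurable_of_map_neZero <| by
    rw [hY]; exact (isProbabilityMeasureBeta (add_pos hp hq) hr).neZero
  change P.map (X * Y) = _
  rw [hindep.map_mul_eq_map_mconv_map₀ hXm hYm, hX, hY, betaMeasure_mconv_betaMeasure hp hq hr]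
end

section
/- Let $x\in\mathbb{R}$ and define the sequence $a_k$ by $a_0=1$, $a_1=x+2$, and for $k\geq 2$, $a_k = \left(1+\frac{x+1}{k}\right)a_{k-1} - \frac{x}{k}a_{k-2}$. Then for all $k\geq 0$, $a_k = (k+1)e^{(k+1)}(x) - x\, e^{(k)}(x)$, where $e^{(n)}(x) = \sum_{i=0}^{n} x^i/i!$ is the $n$-th partial sum of the exponential series. -/
/-- The `n`-th partial sum of the exponential series, `e⁽ⁿ⁾(x) = ∑_{i=0}^n xⁱ/i!`. -/
noncomputable def expPartial (n : ℕ) (x : ℝ) : ℝ :=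
  ∑ i ∈ Finset.range (n + 1), x ^ i / (Nat.factorial i)

lemma expPartial_succ (n : ℕ) (x : ℝ) :
    expPartial (n + 1) x = expPartial n x + x ^ (n + 1) / (Nat.factorial (n + 1)) := by
  simp [expPartial, Finset.sum_range_succ]

/-- If `a₀ = 1`, `a₁ = x + 2` and `aₖ = (1 + (x+1)/k) aₖ₋₁ - (x/k) aₖ₋₂` for `k ≥ 2`,
then `aₖ = (k+1) e⁽ᵏ⁺¹⁾(x) - x e⁽ᵏ⁾(x)` for all `k ≥ 0`. -/
theorem recurrence_partial_exp (x : ℝ) (a : ℕ → ℝ)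
    (h0 : a 0 = 1) (h1 : a 1 = x + 2)
    (hrec : ∀ k, 2 ≤ k →
      a k = (1 + (x + 1) / k) * a (k - 1) - x / k * a (k - 2)) :
    ∀ k, a k = (k + 1) * expPartial (k + 1) x - x * expPartial k x := by
  intro k
  induction k using Nat.twoStepInduction with
  | zero =>
    simp [expPartial, Finset.sum_range_succ, h0]
  | one =>
    simp only [h1, expPartial, Finset.sum_range_succ]
    norm_num
    ring
  | more k ih1 ih2 =>
    have h := hrec (k + 2) (by omega)
    simp only [Nat.add_sub_cancel, show k + 2 - 1 = k + 1 from rfl] at h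
    rw [h, ih1, ih2]
    have e3 := expPartial_succ (k + 2) x
    have e2 := expPartial_succ (k + 1) x
    have e1 := expPartial_succ k x
    rw [e3, e2, e1]
    have f3 : (Nat.factorial (k + 3) : ℝ) = (k + 3) * Nat.factorial (k + 2) := by
      push_cast [Nat.factorial_succ]; ring
    have f2 : (Nat.factorial (k + 2) : ℝ) = (k + 2) * Nat.factorial (k + 1) := by
      push_cast [Nat.factorial_succ]; ring
    have f1 : (Nat.factorial (k + 1) : ℝ) = (k + 1) * Nat.factorial k := by
      push_cast [Nat.factorial_succ]; ring
    have hf : (Nat.factorial k : ℝ) ≠ 0 := by positivity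
    have hk2 : ((k : ℝ) + 2) ≠ 0 := by positivity
    push_cast [show k + 2 + 1 = k + 3 from rfl, f3, f2, f1]
    field_simp
    ring
end

section
/- Let $x> 0$ and define the sequence $a_k$ by $a_0=1$, $a_1 = 3/2 + x/2$, and for $k\geq 2$, $a_k = \left(1+\frac{x+1}{k+1}\right)a_{k-1} - \frac{x}{k}a_{k-2}$. Then $a_k = (k+2)\, x^{-2}\, e_2^{(k+2)}(x)$ for all $k\geq 0$, where $e_2^{(n)}(x) = \sum_{i=2}^{n} x^i/i!$. -/
/-- The partial sum `e_m⁽ⁿ⁾(x) = ∑_{i=m}^n xⁱ/i!` of the exponential series. -/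
noncomputable def expPartialFrom (m n : ℕ) (x : ℝ) : ℝ :=
  ∑ i ∈ Finset.Icc m n, x ^ i / (Nat.factorial i)

/-! The closed form satisfies the same second-order recurrence as `a`, because consecutive
differences of `e_m⁽ⁿ⁾(x)` are the terms `xⁿ/n!`, and `n · xⁿ/n! = x · xⁿ⁻¹/(n-1)!`. A sequence
is determined by such a recurrence and its first two values. -/

theorem Nat.eq_of_two_step_recurrence {α : Type*} (f : ℕ → α → α → α) {a b : ℕ → α}
    (h0 : a 0 = b 0) (h1 : a 1 = b 1)
    (ha : ∀ n, a (n + 2) = f n (a (n + 1)) (a n))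
    (hb : ∀ n, b (n + 2) = f n (b (n + 1)) (b n)) : a = b := by
  funext n
  induction n using Nat.twoStepInduction with
  | zero => exact h0
  | one => exact h1
  | more n ih₀ ih₁ => rw [ha, hb, ih₀, ih₁]

theorem expPartialFrom_self (m : ℕ) (x : ℝ) :
    expPartialFrom m m x = x ^ m / m.factorial := by
  simp [expPartialFrom]

theorem expPartialFrom_succ {m n : ℕ} (hmn : m ≤ n + 1) (x : ℝ) :
    expPartialFrom m (n + 1) x = expPartialFrom m n x + x ^ (n + 1) / (n + 1).factorial := by
  rw [expPartialFrom, expPartialFrom, Finset.sum_Icc_succ_top hmn]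

theorem succ_mul_pow_div_factorial_succ (n : ℕ) (x : ℝ) :
    (n + 1) * (x ^ (n + 1) / (n + 1).factorial) = x * (x ^ n / n.factorial) := by
  rw [Nat.factorial_succ]
  push_cast
  field_simp
  ring

theorem expPartialFrom_recurrence {m n : ℕ} (hmn : m ≤ n + 1) (x : ℝ) :
    (n + 2) * expPartialFrom m (n + 2) x
      = (n + 2 + x) * expPartialFrom m (n + 1) x - x * expPartialFrom m n x := by
  have hstep := succ_mul_pow_div_factorial_succ (n + 1) x
  rw [expPartialFrom_succ (n := n + 1) (by omega), expPartialFrom_succ hmn]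
  push_cast at hstep ⊢
  linear_combination hstep

/-- If `a₀ = 1`, `a₁ = 3/2 + x/2` and `aₖ = (1 + (x+1)/(k+1)) aₖ₋₁ - (x/k) aₖ₋₂`
for `k ≥ 2`, then `aₖ = (k+2) x⁻² e₂⁽ᵏ⁺²⁾(x)` for all `k ≥ 0`. -/
theorem recurrence_e2_partial (x : ℝ) (hx : 0 < x) (a : ℕ → ℝ)
    (h0 : a 0 = 1) (h1 : a 1 = 3 / 2 + x / 2)
    (hrec : ∀ k, 2 ≤ k →
      a k = (1 + (x + 1) / (k + 1)) * a (k - 1) - x / k * a (k - 2)) :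
    ∀ k, a k = (k + 2) * x⁻¹ ^ 2 * expPartialFrom 2 (k + 2) x := by
  let f (n : ℕ) (u v : ℝ) : ℝ := (1 + (x + 1) / (n + 3)) * u - x / (n + 2) * v
  have hx0 : x ≠ 0 := hx.ne'
  refine congrFun (Nat.eq_of_two_step_recurrence f ?_ ?_ (fun n ↦ ?_) (fun n ↦ ?_))
  · rw [h0, expPartialFrom_self]
    norm_num [Nat.factorial]
    field_simp
  · rw [h1, expPartialFrom_succ (by norm_num), expPartialFrom_self]
    norm_num [Nat.factorial]
    field_simp
    ring
  · rw [hrec (n + 2) (by omega)]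
    simp only [f]
    push_cast
    ring_nf
  · have hS := expPartialFrom_recurrence (m := 2) (n := n + 2) (by omega) x
    simp only [f]
    push_cast at hS ⊢
    field_simp
    linear_combination (n + 3 : ℝ) * hS
end

section
/- Let $(E,\mathcal{E},\mu)$ be a measure space and let $\phi_1,\dots,\phi_N,\psi_1,\dots,\psi_N\in L^2(\mu)$. Then $\frac{1}{N!}\int_{E^N} \det(\phi_i(\lambda_j))_{i,j=1}^N \cdot \det(\psi_i(\lambda_j))_{i,j=1}^N \; \mu(d\lambda_1)\cdots\mu(d\lambda_N) = \det\left(\int_E \phi_i\psi_j\, d\mu\right)_{i,j=1}^N$ (Andréief's identity). -/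
/-!
Expanding both determinants writes the integrand as a signed sum, over pairs of permutations
`(σ, τ)`, of products `∏ⱼ φ_{σ j}(λⱼ) ψ_{τ j}(λⱼ)` whose factors each depend on one coordinate,
so Fubini turns each term into `∏ⱼ A_{σ j, τ j}` with `A = (∫ φᵢ ψⱼ dμ)`. For fixed `σ` the sum
over `τ` is the determinant of `A` with rows permuted by `σ`, i.e. `sign σ · det A`, so each of
the `N!` permutations `σ` contributes exactly `det A`.
-/

open MeasureTheory Equiv

namespace Matrix

variable {n R : Type*} [Fintype n] [DecidableEq n] [CommRing R]

theorem det_mul_det_eq_sum_sum (M N : Matrix n n R) :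
    M.det * N.det = ∑ σ : Perm n, ∑ τ : Perm n,
      (Perm.sign σ * Perm.sign τ : R) * ∏ j, M (σ j) j * N (τ j) j := by
  rw [det_apply', det_apply', Finset.sum_mul_sum]
  refine Finset.sum_congr rfl fun σ _ => Finset.sum_congr rfl fun τ _ => ?_
  rw [mul_mul_mul_comm, ← Finset.prod_mul_distrib]

theorem sum_sign_mul_prod_submatrix (A : Matrix n n R) (σ : Perm n) :
    ∑ τ : Perm n, (Perm.sign τ : R) * ∏ j, A (σ j) (τ j) = Perm.sign σ * A.det := by
  rw [← det_permute, ← det_transpose, det_apply']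
  rfl

theorem sum_sum_sign_mul_prod (A : Matrix n n R) :
    ∑ σ : Perm n, ∑ τ : Perm n, (Perm.sign σ * Perm.sign τ : R) * ∏ j, A (σ j) (τ j)
      = (Fintype.card n).factorial * A.det := by
  have hsign (σ : Perm n) : (Perm.sign σ * Perm.sign σ : R) = 1 := by
    rw [← Int.cast_mul, ← Units.val_mul, Int.units_mul_self, Units.val_one, Int.cast_one]
  simp_rw [mul_assoc, ← Finset.mul_sum, sum_sign_mul_prod_submatrix, ← mul_assoc, hsign, one_mul,
    Finset.sum_const, Finset.card_univ, Fintype.card_perm, nsmul_eq_mul]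

end Matrix

open Matrix in
theorem integral_det_mul_det {ι E 𝕜 : Type*} [Fintype ι] [DecidableEq ι] [RCLike 𝕜]
    [MeasurableSpace E] (μ : Measure E) [SigmaFinite μ] (φ ψ : ι → E → 𝕜)
    (hφψ : ∀ i j, Integrable (fun x => φ i x * ψ j x) μ) :
    ∫ l : ι → E, det (of fun i j => φ i (l j)) * det (of fun i j => ψ i (l j))
        ∂(Measure.pi fun _ => μ)
      = (Fintype.card ι).factorial * det (of fun i j => ∫ x, φ i x * ψ j x ∂μ) := by
  have hprod (σ τ : Perm ι) : Integrable (fun l : ι → E => ∏ j, φ (σ j) (l j) * ψ (τ j) (l j))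
      (Measure.pi fun _ => μ) :=
    Integrable.fintype_prod fun j => hφψ (σ j) (τ j)
  simp_rw [det_mul_det_eq_sum_sum, of_apply]
  rw [← sum_sum_sign_mul_prod, integral_finsetSum _ fun σ _ =>
    integrable_finsetSum _ fun τ _ => (hprod σ τ).const_mul _]
  refine Finset.sum_congr rfl fun σ _ => ?_
  rw [integral_finsetSum _ fun τ _ => (hprod σ τ).const_mul _]
  refine Finset.sum_congr rfl fun τ _ => ?_
  rw [integral_const_mul, integral_fintype_prod_eq_prod (fun j x => φ (σ j) x * ψ (τ j) x)]
  simp only [of_apply]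

/-- Andréief's identity: for `φ₁, …, φ_N, ψ₁, …, ψ_N ∈ L²(μ)`,
`(1/N!) ∫ det(φᵢ(λⱼ)) det(ψᵢ(λⱼ)) μ(dλ₁)⋯μ(dλ_N) = det(∫ φᵢ ψⱼ dμ)`. -/
theorem andreief_identity {E : Type*} [MeasurableSpace E] (μ : Measure E) [SigmaFinite μ]
    (N : ℕ) (φ ψ : Fin N → E → ℂ)
    (hφ : ∀ i, MeasureTheory.MemLp (φ i) 2 μ)
    (hψ : ∀ i, MeasureTheory.MemLp (ψ i) 2 μ) :
    (1 / (Nat.factorial N : ℂ)) *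
        ∫ l : Fin N → E,
          (Matrix.det (Matrix.of fun i j => φ i (l j))) *
            (Matrix.det (Matrix.of fun i j => ψ i (l j)))
          ∂(Measure.pi fun _ : Fin N => μ)
      = Matrix.det (Matrix.of fun i j => ∫ x, φ i x * ψ j x ∂μ) := by
  rw [integral_det_mul_det μ φ ψ fun i j => (hφ i).integrable_mul (hψ j), Fintype.card_fin,
    ← mul_assoc, one_div_mul_cancel (Nat.cast_ne_zero.mpr N.factorial_ne_zero), one_mul]
end

section
/- The set of 'product symmetric polynomials' $\{\prod_{i=1}^N P(X_i) : P\in\mathbb{C}[X]\}$ spans the vector space of symmetric polynomials in $N$ variables over $\mathbb{C}$. -/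
/-!
Since `∏ P(Xᵢ) · ∏ Q(Xᵢ) = ∏ (PQ)(Xᵢ)`, the product symmetric polynomials form a monoid, so
their span is a subalgebra. For every `a ∈ ℂ` it contains `∏ (a + Xᵢ) = ∑ⱼ a ^ (N - j) eⱼ`, and
as `ℂ` is infinite each coefficient `eⱼ` of this polynomial in `a` lies in the span as well. By
the fundamental theorem of symmetric polynomials the `eⱼ` generate all symmetric polynomials.
-/

open MvPolynomial

open Polynomial in
theorem Polynomial.coeff_mem_of_forall_eval_algebraMap_mem {K A : Type*} [Field K] [Infinite K]
    [Ring A] [Algebra K A] (W : Submodule K A) (p : A[X])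
    (h : ∀ a : K, p.eval (algebraMap K A a) ∈ W) (k : ℕ) : p.coeff k ∈ W := by
  by_contra hk
  obtain ⟨g, hgk, hgW⟩ := W.exists_dual_map_eq_bot_of_notMem hk inferInstance
  have hg : ∀ x ∈ W, g x = 0 := fun x hx =>
    (Submodule.mem_bot K).1 (hgW ▸ Submodule.mem_map_of_mem hx)
  have hr : ∑ n ∈ p.support, monomial n (g (p.coeff n)) = 0 := Polynomial.funext fun a => by
    rw [eval_zero, ← hg _ (h a), eval_eq_sum (p := p), Polynomial.sum_def, eval_finsetSum,
      map_sum]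
    refine Finset.sum_congr rfl fun n _ => ?_
    rw [eval_monomial, ← map_pow, ← Algebra.commutes, ← Algebra.smul_def, map_smul,
      smul_eq_mul, mul_comm]
  have hrk := congrArg (coeff · k) hr
  simp only [finsetSum_coeff, coeff_monomial, Finset.sum_ite_eq', mem_support_iff,
    coeff_zero] at hrk
  by_cases hpk : p.coeff k = 0
  · exact hk (hpk ▸ W.zero_mem)
  · exact hgk (by simpa [hpk] using hrk)

namespace MvPolynomial

variable {σ : Type*} [Fintype σ]

section CommSemiring

variable (σ) (R : Type*) [CommSemiring R]

noncomputable def productSymmetric : Polynomial R →* MvPolynomial σ R where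
  toFun P := ∏ i, Polynomial.aeval (X i) P
  map_one' := by simp
  map_mul' P Q := by simp [Finset.prod_mul_distrib]

variable {σ R}

lemma productSymmetric_apply (P : Polynomial R) :
    productSymmetric σ R P = ∏ i, Polynomial.aeval (X i) P := rfl

lemma isSymmetric_productSymmetric (P : Polynomial R) :
    (productSymmetric σ R P).IsSymmetric := by
  intro e
  simp only [productSymmetric_apply, map_prod, ← Polynomial.aeval_algHom_apply, rename_X]
  exact Equiv.prod_comp e fun i => Polynomial.aeval (X i) P

end CommSemiring

lemma symmetricSubalgebra_le_of_esymm_mem {R : Type*} [CommRing R]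
    {S : Subalgebra R (MvPolynomial σ R)} (h : ∀ j ≤ Fintype.card σ, esymm σ R j ∈ S) :
    symmetricSubalgebra σ R ≤ S := by
  intro q hq
  obtain ⟨p, hp⟩ := esymmAlgHom_surjective R le_rfl ⟨q, hq⟩
  rw [show q = _ from congrArg Subtype.val hp.symm, esymmAlgHom_apply]
  exact Algebra.adjoin_le (Set.range_subset_iff.2 fun i => h _ i.2)
    ((aeval_range _).le (AlgHom.mem_range_self _ p))

variable {K : Type*} [Field K] [Infinite K]

lemma esymm_mem_span_productSymmetric {j : ℕ} (hj : j ≤ Fintype.card σ) :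
    esymm σ K j ∈ Submodule.span K (Set.range (productSymmetric σ K)) := by
  rw [← Nat.sub_sub_self hj, ← prod_X_add_C_coeff K σ _ (Nat.sub_le _ _)]
  refine Polynomial.coeff_mem_of_forall_eval_algebraMap_mem _ _ (fun a => ?_) _
  refine Submodule.subset_span ⟨Polynomial.X + Polynomial.C a, ?_⟩
  simp [productSymmetric_apply, Polynomial.eval_prod, algebraMap_eq, add_comm]

theorem span_productSymmetric :
    Submodule.span K (Set.range (productSymmetric σ K)) =
      Subalgebra.toSubmodule (symmetricSubalgebra σ K) := by
  have hspan : Submodule.span K (Set.range (productSymmetric σ K)) =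
      Subalgebra.toSubmodule (Algebra.adjoin K (Set.range (productSymmetric σ K))) := by
    rw [Algebra.adjoin_eq_span, ← MonoidHom.coe_mrange, Submonoid.closure_eq]
  rw [hspan]
  refine congrArg _ (le_antisymm (Algebra.adjoin_le ?_) (symmetricSubalgebra_le_of_esymm_mem
    fun j hj => Algebra.span_le_adjoin K _ (esymm_mem_span_productSymmetric hj)))
  rintro _ ⟨P, rfl⟩
  exact isSymmetric_productSymmetric P

end MvPolynomial

/-- The set of product symmetric polynomials `∏ᵢ P(Xᵢ)`, `P ∈ ℂ[X]`, spans the vector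
space of symmetric polynomials in `N` variables over `ℂ`. -/
theorem span_product_symmetric (N : ℕ) :
    Submodule.span ℂ
        {q : MvPolynomial (Fin N) ℂ |
          ∃ P : Polynomial ℂ, q = ∏ i : Fin N, Polynomial.aeval (X i) P}
      = Subalgebra.toSubmodule (symmetricSubalgebra (Fin N) ℂ) := by
  rw [← span_productSymmetric]
  congr 1
  exact Set.ext fun q => exists_congr fun P => eq_comm
end

section
/- Let $U_N$ be uniformly distributed on $\{2,\dots,N\}$, and conditionally on $U_N=j$ let $B$ be Beta distributed with parameters $(1,j)$. Then as $N\to\infty$, $N\cdot B$ converges in distribution to the law on $(0,\infty)$ with density $\frac{1-(1+t)e^{-t}}{t^2}$. -/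
/-!
After the substitution `t = N x`, the mixture becomes `∫₀^∞ f(t) g_N(t) dt` with
`g_N(t) = ∑_{j=2}^N j (1 - t/N)^{j-1} / (N (N - 1))` on `(0, N)`. Summing the derivative of a
geometric series gives the closed form
`g_N(t) = N/(N-1) · (1 - (1+t)(1-t/N)^N)/t² - 1/(N(N-1))`, which converges to
`(1 - (1+t)e^{-t})/t²` because `(1 - t/N)^N → e^{-t}`. The termwise bound `j (1-t/N)^{j-1} ≤ N`
gives `g_N ≤ 1`, the closed form gives `t² g_N ≤ 2`, so `g_N(t) ≤ 3/(1+t²)` and dominated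
convergence applies.
-/

open MeasureTheory Filter Set Topology

theorem sum_Icc_two_mul_pow_mul_one_sub_sq {R : Type*} [CommRing R] (y : R) {N : ℕ}
    (hN : 1 ≤ N) :
    (∑ j ∈ Finset.Icc 2 N, (j : R) * y ^ (j - 1)) * (1 - y) ^ 2
      = 1 - (N + 1) * y ^ N + N * y ^ (N + 1) - (1 - y) ^ 2 := by
  induction N, hN using Nat.le_induction with
  | base =>
    simp only [Finset.Icc_eq_empty_of_lt one_lt_two, Finset.sum_empty, Nat.cast_one]
    ring
  | succ n hn ih =>
    rw [Finset.sum_Icc_succ_top (by omega), Nat.add_sub_cancel]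
    push_cast
    linear_combination ih

/-- The density of `N • B`, via the substitution `t = N x`. For `N < 2` the sum is empty, so the
junk value of `1 / (N - 1)` at `N = 1` plays no role. -/
noncomputable def betaMixtureDensity (N : ℕ) (t : ℝ) : ℝ :=
  (Ioo 0 (N : ℝ)).indicator
    (fun t ↦ (∑ j ∈ Finset.Icc 2 N, (j : ℝ) * (1 - t / N) ^ (j - 1)) / (N * (N - 1))) t

noncomputable def betaMixtureLimitDensity (t : ℝ) : ℝ :=
  (1 - (1 + t) * Real.exp (-t)) / t ^ 2

theorem measurable_betaMixtureDensity (N : ℕ) : Measurable (betaMixtureDensity N) :=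
  (by fun_prop : Measurable fun t : ℝ ↦
    (∑ j ∈ Finset.Icc 2 N, (j : ℝ) * (1 - t / N) ^ (j - 1)) / (N * (N - 1))).indicator
    measurableSet_Ioo

theorem betaMixtureDensity_eq_of_mem_Ioo {N : ℕ} {t : ℝ} (hN : 2 ≤ N)
    (ht : t ∈ Ioo 0 (N : ℝ)) :
    betaMixtureDensity N t
      = N / (N - 1) * ((1 - (1 + t) * (1 - t / N) ^ N) / t ^ 2) - ((N : ℝ) * (N - 1))⁻¹ := by
  have hN1 : (N : ℝ) - 1 ≠ 0 := by
    have : (2 : ℝ) ≤ N := by exact_mod_cast hN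
    linarith
  have hsum := sum_Icc_two_mul_pow_mul_one_sub_sq (1 - t / N) (N := N) (by omega)
  rw [sub_sub_cancel, ← eq_div_iff (by positivity [ht.1.ne'])] at hsum
  rw [betaMixtureDensity, indicator_of_mem ht, hsum]
  set y := 1 - t / N
  have hty : t = N * (1 - y) := by simp [y, field]
  clear_value y
  subst hty
  have : 1 - y ≠ 0 := right_ne_zero_of_mul ht.1.ne'
  field_simp
  ring

theorem betaMixtureDensity_nonneg (N : ℕ) (t : ℝ) : 0 ≤ betaMixtureDensity N t := by
  refine indicator_nonneg (fun t ht ↦ div_nonneg (Finset.sum_nonneg fun j _ ↦ ?_) ?_) t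
  · have : 0 ≤ 1 - t / N := sub_nonneg.2 ((div_le_one (ht.1.trans ht.2)).2 ht.2.le)
    positivity
  · have : 0 < N := by exact_mod_cast ht.1.trans ht.2
    have : (1 : ℝ) ≤ N := by exact_mod_cast this
    nlinarith

theorem betaMixtureDensity_le_one (N : ℕ) (t : ℝ) : betaMixtureDensity N t ≤ 1 := by
  refine indicator_apply_le' (fun ht ↦ ?_) fun _ ↦ zero_le_one
  have hN : (0 : ℝ) < N := ht.1.trans ht.2
  have hy0 : 0 ≤ 1 - t / N := sub_nonneg.2 ((div_le_one hN).2 ht.2.le)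
  have hy1 : 1 - t / N ≤ 1 := sub_le_self _ (div_nonneg ht.1.le hN.le)
  rcases lt_or_ge N 2 with hN2 | hN2
  · simp [Finset.Icc_eq_empty_of_lt hN2]
  have hsum : ∑ j ∈ Finset.Icc 2 N, (j : ℝ) * (1 - t / N) ^ (j - 1) ≤ (N - 1) * N := by
    calc ∑ j ∈ Finset.Icc 2 N, (j : ℝ) * (1 - t / N) ^ (j - 1)
        ≤ ∑ _j ∈ Finset.Icc 2 N, (N : ℝ) := Finset.sum_le_sum fun j hj ↦
          (mul_le_mul_of_nonneg_right (by exact_mod_cast (Finset.mem_Icc.1 hj).2)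
            (pow_nonneg hy0 _)).trans (mul_le_of_le_one_right hN.le (pow_le_one₀ hy0 hy1))
      _ = (N - 1) * N := by
          rw [Finset.sum_const, Nat.card_Icc, nsmul_eq_mul, Nat.cast_sub (by omega)]
          push_cast
          ring
  have : (0 : ℝ) < N * (N - 1) := by
    have : (2 : ℝ) ≤ N := by exact_mod_cast hN2
    nlinarith
  rw [div_le_one this]
  linarith

theorem betaMixtureDensity_mul_sq_le_two (N : ℕ) (t : ℝ) :
    betaMixtureDensity N t * t ^ 2 ≤ 2 := by
  by_cases ht : t ∈ Ioo 0 (N : ℝ)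
  swap
  · simp [betaMixtureDensity, indicator_of_notMem ht]
  rcases lt_or_ge N 2 with hN2 | hN2
  · simp [betaMixtureDensity, Finset.Icc_eq_empty_of_lt hN2]
  have hN : (2 : ℝ) ≤ N := by exact_mod_cast hN2
  have hy0 : 0 ≤ 1 - t / N := sub_nonneg.2 ((div_le_one (ht.1.trans ht.2)).2 ht.2.le)
  have hratio : 0 ≤ N / (N - 1 : ℝ) := div_nonneg (by linarith) (by linarith)
  calc betaMixtureDensity N t * t ^ 2
      = (N : ℝ) / (N - 1) * (1 - (1 + t) * (1 - t / N) ^ N)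
          - ((N : ℝ) * (N - 1))⁻¹ * t ^ 2 := by
        rw [betaMixtureDensity_eq_of_mem_Ioo hN2 ht, sub_mul, mul_assoc,
          div_mul_cancel₀ _ (pow_ne_zero 2 ht.1.ne')]
    _ ≤ (N : ℝ) / (N - 1) * 1 - 0 := by
        gcongr
        · linarith [mul_nonneg (by linarith [ht.1] : 0 ≤ 1 + t) (pow_nonneg hy0 N)]
        · have : (0 : ℝ) ≤ N - 1 := by linarith
          positivity
    _ ≤ 2 := by
        rw [mul_one, sub_zero, div_le_iff₀ (by linarith)]
        linarith

theorem betaMixtureDensity_le_three_mul_inv_one_add_sq (N : ℕ) (t : ℝ) :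
    betaMixtureDensity N t ≤ 3 * (1 + t ^ 2)⁻¹ := by
  rw [← div_eq_mul_inv, le_div_iff₀ (by positivity), mul_add, mul_one]
  linarith [betaMixtureDensity_le_one N t, betaMixtureDensity_mul_sq_le_two N t]

theorem tendsto_betaMixtureDensity {t : ℝ} (ht : 0 < t) :
    Tendsto (betaMixtureDensity · t) atTop (𝓝 (betaMixtureLimitDensity t)) := by
  have hratio : Tendsto (fun N : ℕ ↦ (N : ℝ) / (N - 1)) atTop (𝓝 1) := by
    simpa [sub_eq_add_neg] using tendsto_natCast_div_add_atTop (-1 : ℝ)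
  have hpow : Tendsto (fun N : ℕ ↦ (1 - t / N) ^ N) atTop (𝓝 (Real.exp (-t))) := by
    simpa [neg_div, ← sub_eq_add_neg] using Real.tendsto_one_add_div_pow_exp (-t)
  have hsmall : Tendsto (fun N : ℕ ↦ ((N : ℝ) * (N - 1))⁻¹) atTop (𝓝 0) :=
    (tendsto_natCast_atTop_atTop.atTop_mul_atTop₀
      (tendsto_atTop_add_const_right _ (-1) tendsto_natCast_atTop_atTop)).inv_tendsto_atTop
  have hlim := (hratio.mul (((hpow.const_mul (1 + t)).const_sub 1).div_const (t ^ 2))).sub hsmall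
  rw [one_mul, sub_zero] at hlim
  refine hlim.congr' ?_
  filter_upwards [eventually_ge_atTop 2, eventually_gt_atTop ⌊t⌋₊] with N hN2 htN
  exact (betaMixtureDensity_eq_of_mem_Ioo hN2 ⟨ht, Nat.lt_of_floor_lt htN⟩).symm

theorem setIntegral_Ioo_comp_mul_left {E : Type*} [NormedAddCommGroup E] [NormedSpace ℝ E]
    (g : ℝ → E) {a b c : ℝ} (hab : a ≤ b) (hc : 0 < c) :
    ∫ x in Ioo a b, g (c * x) = c⁻¹ • ∫ x in Ioo (c * a) (c * b), g x := by
  rw [← integral_Ioc_eq_integral_Ioo, ← integral_Ioc_eq_integral_Ioo,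
    ← intervalIntegral.integral_of_le hab,
    ← intervalIntegral.integral_of_le (mul_le_mul_of_nonneg_left hab hc.le),
    intervalIntegral.integral_comp_mul_left _ hc.ne']

theorem betaMixture_expectation_eq_setIntegral_density {f : ℝ → ℝ} (hf : Continuous f)
    {N : ℕ} (hN : 2 ≤ N) :
    (1 / ((N : ℝ) - 1)) * ∑ j ∈ Finset.Icc 2 N,
        ∫ x in Ioo (0 : ℝ) 1, f (N * x) * ((j : ℝ) * (1 - x) ^ (j - 1))
      = ∫ t in Ioi 0, f t * betaMixtureDensity N t := by
  have hN0 : (0 : ℝ) < N := by positivity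
  have hterm (j : ℕ) : ∫ x in Ioo (0 : ℝ) 1, f (N * x) * ((j : ℝ) * (1 - x) ^ (j - 1))
      = (N : ℝ)⁻¹ * ∫ t in Ioo 0 (N : ℝ), f t * ((j : ℝ) * (1 - t / N) ^ (j - 1)) := by
    simpa [mul_div_cancel_left₀ _ hN0.ne'] using setIntegral_Ioo_comp_mul_left
      (fun t ↦ f t * ((j : ℝ) * (1 - t / N) ^ (j - 1))) zero_le_one hN0
  simp_rw [hterm, betaMixtureDensity, ← indicator_mul_right]
  rw [← Finset.mul_sum, ← integral_finsetSum _ fun j _ ↦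
      (by fun_prop : Continuous _).integrableOn_Icc.mono_set Ioo_subset_Icc_self,
    setIntegral_indicator measurableSet_Ioo, inter_eq_self_of_subset_right Ioo_subset_Ioi_self,
    ← mul_assoc, ← integral_const_mul]
  congr 1 with t
  rw [← Finset.mul_sum]
  field_simp

theorem tendsto_integral_mul_of_dominated {α : Type*} [MeasurableSpace α] {μ : Measure α}
    {f G g : α → ℝ} {F : ℕ → α → ℝ} {C : ℝ} (hf : AEStronglyMeasurable f μ)
    (hfC : ∀ x, |f x| ≤ C) (hF : ∀ N, AEStronglyMeasurable (F N) μ) (hG : Integrable G μ)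
    (hFG : ∀ N, ∀ᵐ x ∂μ, |F N x| ≤ G x)
    (hlim : ∀ᵐ x ∂μ, Tendsto (F · x) atTop (𝓝 (g x))) :
    Tendsto (fun N ↦ ∫ x, f x * F N x ∂μ) atTop (𝓝 (∫ x, f x * g x ∂μ)) := by
  refine tendsto_integral_of_dominated_convergence (fun x ↦ C * G x) (fun N ↦ hf.mul (hF N))
    (hG.const_mul C) (fun N ↦ (hFG N).mono fun x hx ↦ ?_)
    (hlim.mono fun x hx ↦ hx.const_mul _)
  rw [norm_mul, Real.norm_eq_abs, Real.norm_eq_abs]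
  exact mul_le_mul (hfC x) hx (abs_nonneg _) ((abs_nonneg _).trans (hfC x))

/-- Let `U_N` be uniform on `{2, …, N}` and, conditionally on `U_N = j`, let `B` be
Beta distributed with parameters `(1, j)` (density `j(1-x)^{j-1}` on `[0,1]`). Then
`N·B` converges in distribution, as `N → ∞`, to the law on `(0,∞)` with density
`(1 - (1+t)e^{-t})/t²`: for every bounded continuous `f`,
`E(f(N B)) = (1/(N-1)) ∑_{j=2}^N ∫_0^1 f(Nx) j (1-x)^{j-1} dx
  → ∫_0^∞ f(t) (1 - (1+t)e^{-t})/t² dt`. -/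
theorem mixture_beta_tendsto
    (f : ℝ → ℝ) (hf : Continuous f) (hbdd : ∃ C, ∀ x, |f x| ≤ C) :
    Tendsto (fun N : ℕ =>
        (1 / ((N : ℝ) - 1)) * ∑ j ∈ Finset.Icc 2 N,
          ∫ x in Set.Ioo (0:ℝ) 1, f (N * x) * ((j : ℝ) * (1 - x) ^ (j - 1)))
      atTop
      (nhds (∫ t in Set.Ioi (0:ℝ), f t * ((1 - (1 + t) * Real.exp (-t)) / t ^ 2))) := by
  obtain ⟨C, hC⟩ := hbdd
  have hdom (N : ℕ) : ∀ t, |betaMixtureDensity N t| ≤ 3 * (1 + t ^ 2)⁻¹ := fun t ↦ by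
    rw [abs_of_nonneg (betaMixtureDensity_nonneg N t)]
    exact betaMixtureDensity_le_three_mul_inv_one_add_sq N t
  have hlim : ∀ᵐ t ∂volume.restrict (Ioi 0),
      Tendsto (betaMixtureDensity · t) atTop (𝓝 (betaMixtureLimitDensity t)) :=
    (ae_restrict_iff' measurableSet_Ioi).2 (ae_of_all _ fun _ ↦ tendsto_betaMixtureDensity)
  refine (tendsto_integral_mul_of_dominated hf.aestronglyMeasurable hC
    (fun N ↦ (measurable_betaMixtureDensity N).aestronglyMeasurable)
    (integrable_inv_one_add_sq.const_mul 3).restrict (fun N ↦ ae_of_all _ (hdom N))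
    hlim).congr' ?_
  filter_upwards [eventually_ge_atTop 2] with N hN
  exact (betaMixture_expectation_eq_setIntegral_density hf hN).symm
end
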